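/- Let d, n, K ∈ ℕ with d, n, K ≥ 1. There exist a feedforward block F_sr : ℝ^{d×n} → ℝ^{2d×n} of depth K + 3 and width 3dn with activation functions ReLU and floor, a single-head softmax self-attention layer F_SA : ℝ^{2d×n} → ℝ^{2d×n}, and an affine map A : ℝ^{2d×n} → ℝ^{d×n} such that A(F_SA(F_sr(X))) = Z(X) for every X ∈ [0,1)^{d×n}. -/

import Mathlib

open Finset Real Set MeasureTheory

noncomputable section

/-- Matrix–vector product with explicit inner dimension `m`. -/
def mulVecN (W : ℕ → ℕ → ℝ) (m : ℕ) (v : ℕ → ℝ) : ℕ → ℝ :=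
  fun i => ∑ j ∈ Finset.range m, W i j * v j

/-- Matrix–matrix product with explicit inner dimension `m`. -/
def matMulN (A : ℕ → ℕ → ℝ) (m : ℕ) (B : ℕ → ℕ → ℝ) : ℕ → ℕ → ℝ :=
  fun i j => ∑ t ∈ Finset.range m, A i t * B t j

/-- The ReLU activation. -/
def reluF : ℝ → ℝ := fun x => max x 0

/-- The floor activation. -/
def floorF : ℝ → ℝ := fun x => (⌊x⌋ : ℝ)

/-- Hidden layers of a feedforward network acting on vectors:
`ffLayers dims Wt b act l x` is the output of the `l`-th hidden layer. -/
def ffLayers (dims : ℕ → ℕ) (Wt : ℕ → ℕ → ℕ → ℝ) (b : ℕ → ℕ → ℝ)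
    (act : ℕ → ℕ → ℝ → ℝ) : ℕ → (ℕ → ℝ) → ℕ → ℝ
  | 0, x => x
  | l + 1, x => fun i =>
      act (l + 1) i (mulVecN (Wt (l + 1)) (dims l) (ffLayers dims Wt b act l x) i + b (l + 1) i)

/-- `f` is a feedforward neural network function from `ℝ^k` to `ℝ^{k'}` of depth `L` and
width `W`, whose activation functions (which may vary between rows and layers) all belong
to `A`.  Vectors are represented as functions `ℕ → ℝ`; only the first `k` coordinates of the
input and the first `k'` coordinates of the output are relevant. -/
def IsFFNet (k k' L W : ℕ) (A : Set (ℝ → ℝ)) (f : (ℕ → ℝ) → ℕ → ℝ) : Prop :=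
  ∃ (dims : ℕ → ℕ) (Wt : ℕ → ℕ → ℕ → ℝ) (b : ℕ → ℕ → ℝ) (act : ℕ → ℕ → ℝ → ℝ),
    dims 0 = k ∧ dims L = k' ∧ (∀ l, 0 < l → l < L → dims l ≤ W) ∧
    (∀ l i, act l i ∈ A) ∧
    ∀ x, f x = mulVecN (Wt L) (dims (L - 1)) (ffLayers dims Wt b act (L - 1) x)

/-- Hidden layers of a feedforward block acting columnwise on matrices, with
column-dependent biases. -/
def ffBlockLayers (dims : ℕ → ℕ) (Wt : ℕ → ℕ → ℕ → ℝ) (B : ℕ → ℕ → ℕ → ℝ)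
    (act : ℕ → ℕ → ℝ → ℝ) : ℕ → (ℕ → ℕ → ℝ) → ℕ → ℕ → ℝ
  | 0, X => X
  | l + 1, X => fun i s =>
      act (l + 1) i
        (mulVecN (Wt (l + 1)) (dims l) (fun t => ffBlockLayers dims Wt B act l X t s) i
          + B (l + 1) i s)

/-- `F` is a feedforward block from `ℝ^{k×n}` to `ℝ^{k'×n}` of depth `L` and width `W`,
with activation functions in `A`; it acts on each column by the same affine maps, the bias
matrices may have distinct columns, and in each layer every row uses some activation from
`A` (possibly varying between rows and layers). -/
def IsFFBlock (k k' L W : ℕ) (A : Set (ℝ → ℝ)) (F : (ℕ → ℕ → ℝ) → ℕ → ℕ → ℝ) : Prop :=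
  ∃ (dims : ℕ → ℕ) (Wt : ℕ → ℕ → ℕ → ℝ) (B : ℕ → ℕ → ℕ → ℝ) (act : ℕ → ℕ → ℝ → ℝ),
    dims 0 = k ∧ dims L = k' ∧ (∀ l, 0 < l → l < L → dims l ≤ W) ∧
    (∀ l i, act l i ∈ A) ∧
    ∀ X i s,
      F X i s = mulVecN (Wt L) (dims (L - 1))
        (fun t => ffBlockLayers dims Wt B act (L - 1) X t s) i

/-- `F` is a single-head softmax self-attention layer on `m × n` matrices:
`F(X) = X + W_O W_V X σ_S[(W_K X)ᵀ (W_Q X)]`, where the softmax is applied columnwise. -/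
def IsSelfAttn (m n : ℕ) (F : (ℕ → ℕ → ℝ) → ℕ → ℕ → ℝ) : Prop :=
  ∃ (hs : ℕ) (WO WV WK WQ : ℕ → ℕ → ℝ),
    ∀ X i j,
      F X i j = X i j +
        matMulN (matMulN WO hs WV) m
          (matMulN X n (fun a b =>
            Real.exp (∑ u ∈ Finset.range hs, matMulN WK m X u a * matMulN WQ m X u b) /
              ∑ t ∈ Finset.range n,
                Real.exp (∑ u ∈ Finset.range hs, matMulN WK m X u t * matMulN WQ m X u b))) i j

/-- An affine map on matrices, acting columnwise: `A(Y) = W Y + b` with `W` a `k'×k`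
matrix and `b` a bias matrix. -/
def IsAffineM (k : ℕ) (A : (ℕ → ℕ → ℝ) → ℕ → ℕ → ℝ) : Prop :=
  ∃ (W : ℕ → ℕ → ℝ) (b : ℕ → ℕ → ℝ),
    ∀ Y i s, A Y i s = mulVecN W k (fun t => Y t s) i + b i s

/-- Embedding of a `d × n` real matrix into the `ℕ`-indexed representation. -/
def embedM {d n : ℕ} (X : Fin d → Fin n → ℝ) : ℕ → ℕ → ℝ :=
  fun i j => if h : i < d ∧ j < n then X ⟨i, h.1⟩ ⟨j, h.2⟩ else 0

/-- The Hölder class `H^β_Q([0,1]^{d×n}, ℝ^{d×n})`: every component of `f` is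
`(β,Q)`-Hölder on the unit cube w.r.t. the entrywise sup distance. -/
def HolderClassM (d n : ℕ) (β Q : ℝ)
    (f : (Fin d → Fin n → ℝ) → Fin d → Fin n → ℝ) : Prop :=
  ∀ X Y : Fin d → Fin n → ℝ,
    (∀ p q, X p q ∈ Set.Icc (0:ℝ) 1) → (∀ p q, Y p q ∈ Set.Icc (0:ℝ) 1) →
    ∀ r s, |f X r s - f Y r s| ≤ Q * dist X Y ^ β

/-- The `j`-th binary digit of `x` (terminating expansion for dyadic rationals). -/
def binDigit (x : ℝ) (j : ℕ) : ℤ :=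
  ⌊(2:ℝ) ^ j * x⌋ - 2 * ⌊(2:ℝ) ^ (j - 1) * x⌋

/-- The truncated inner function `φ_K(x) = Σ_{j=1}^K 2 a_j^x 3^{-1-D(j-1)}`. -/
def phiK (D K : ℕ) (x : ℝ) : ℝ :=
  ∑ j ∈ Finset.Icc 1 K, 2 * (binDigit x j : ℝ) * ((3:ℝ) ^ (1 + D * (j - 1)))⁻¹

/-- The inner function `φ(x) = Σ_{j=1}^∞ 2 a_j^x 3^{-1-D(j-1)}`. -/
def phiInf (D : ℕ) (x : ℝ) : ℝ :=
  ∑' j : ℕ, 2 * (binDigit x (j + 1) : ℝ) * ((3:ℝ) ^ (1 + D * j))⁻¹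

/-- The inner matrix `Z(X)`: `Z(X)_{rs}` is independent of `r` and equals
`3^{Kdn+1} Σ_{q=1}^n Σ_{p=1}^d 3^{-((p-1)n+q)} φ_K(X_{pq}) + 1 + (s-1) 3^{Kdn}`. -/
def innerZ (d n K : ℕ) (X : Fin d → Fin n → ℝ) (s : Fin n) : ℝ :=
  (3:ℝ) ^ (K * d * n + 1) *
      (∑ q : Fin n, ∑ p : Fin d,
        ((3:ℝ) ^ ((p : ℕ) * n + (q : ℕ) + 1))⁻¹ * phiK (d * n) K (X p q))
    + 1 + (s : ℕ) * (3:ℝ) ^ (K * d * n)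

/-- The Kolmogorov–Arnold inner sum `3 Σ_{q=1}^n Σ_{p=1}^d 3^{-((p-1)n+q)} φ(X_{pq})`. -/
def innerKA (d n : ℕ) (X : Fin d → Fin n → ℝ) : ℝ :=
  3 * ∑ q : Fin n, ∑ p : Fin d,
    ((3:ℝ) ^ ((p : ℕ) * n + (q : ℕ) + 1))⁻¹ * phiInf (d * n) (X p q)

/-- The unit cube `[0,1]^{d×n}`. -/
def unitBox (d n : ℕ) : Set (Fin d → Fin n → ℝ) :=
  {X | ∀ p q, X p q ∈ Set.Icc (0:ℝ) 1}

/-- `f` admits a Kolmogorov–Arnold representation with outer functions `g r s`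
(defined on the middle-thirds Cantor set), which are Hölder with exponent
`β log 2 / (dn log 3)` and constant `2^β Q`. -/
def HasKARep (d n : ℕ) (β Q : ℝ) (f : (Fin d → Fin n → ℝ) → Fin d → Fin n → ℝ)
    (g : Fin d → Fin n → ℝ → ℝ) : Prop :=
  (∀ r s, ∀ x ∈ cantorSet, ∀ y ∈ cantorSet,
      |g r s x - g r s y| ≤ (2:ℝ) ^ β * Q * |x - y| ^ (β * Real.log 2 / ((d * n : ℕ) * Real.log 3))) ∧
  (∀ X ∈ unitBox d n, ∀ r s, f X r s = g r s (innerKA d n X))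

/-! Each column is processed on its own by the feedforward block, whose hidden layers act as
registers. ReLU rows hold the doubled fractional parts `2 {2^m x}` and floor rows read off the
binary digits one per layer; an accumulator row adds each digit `a_j` of the entry `X_pq` with
weight `2 · 3^{-1-dn(j-1)} · 3^{-((p-1)n+q)}`, so after `K + 2` layers it holds
`Σ_p 3^{-((p-1)n+q)} φ_K(X_pq)` for its column `q`. A self-attention layer with zero keys has
a uniform softmax and so adds the sum of these column values to every column; the affine map
multiplies by `3^{Kdn+1}` and adds the column offset `1 + (s-1) 3^{Kdn}`. -/

lemma binDigit_succ (x : ℝ) (j : ℕ) :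
    binDigit x (j + 1) = ⌊2 * Int.fract ((2:ℝ) ^ j * x)⌋ := by
  have h : 2 * Int.fract ((2:ℝ) ^ j * x)
      = (2:ℝ) ^ (j + 1) * x - ((2 * ⌊(2:ℝ) ^ j * x⌋ : ℤ) : ℝ) := by
    rw [Int.fract]; push_cast [pow_succ]; ring
  rw [h, Int.floor_sub_intCast, binDigit, Nat.add_sub_cancel]

lemma fract_two_pow_succ_mul (x : ℝ) (j : ℕ) :
    Int.fract ((2:ℝ) ^ (j + 1) * x) = 2 * Int.fract ((2:ℝ) ^ j * x) - binDigit x (j + 1) := by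
  rw [binDigit, Nat.add_sub_cancel, Int.fract, Int.fract]
  push_cast [pow_succ]
  ring

lemma binDigit_zero_of_mem_Ico {x : ℝ} (hx : x ∈ Set.Ico 0 1) : binDigit x 0 = 0 := by
  simp [binDigit, Int.floor_eq_zero_iff.2 hx]

lemma binDigit_eq_zero_or_one {x : ℝ} (hx : x ∈ Set.Ico 0 1) (j : ℕ) :
    binDigit x j = 0 ∨ binDigit x j = 1 := by
  cases j with
  | zero => exact Or.inl (binDigit_zero_of_mem_Ico hx)
  | succ j =>
    have h0 := Int.fract_nonneg ((2:ℝ) ^ j * x)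
    have h1 := Int.fract_lt_one ((2:ℝ) ^ j * x)
    have hlo : 0 ≤ binDigit x (j + 1) := by
      rw [binDigit_succ]; exact Int.floor_nonneg.2 (by linarith)
    have hhi : binDigit x (j + 1) < 2 := by
      rw [binDigit_succ]; exact Int.floor_lt.2 (by push_cast; linarith)
    omega

lemma binDigit_nonneg {x : ℝ} (hx : x ∈ Set.Ico 0 1) (j : ℕ) : (0:ℝ) ≤ binDigit x j := by
  rcases binDigit_eq_zero_or_one hx j with h | h <;> simp [h]

lemma reluF_of_nonneg {x : ℝ} (hx : 0 ≤ x) : reluF x = x := max_eq_left hx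

/-- This is how a column-dependent bias multiplies a bit by a column-dependent constant. -/
lemma reluF_bit_add_sub_one {b c : ℝ} (hb : b = 0 ∨ b = 1) (hc₀ : 0 ≤ c) (hc₁ : c ≤ 1) :
    reluF (b + (c - 1)) = c * b := by
  rcases hb with rfl | rfl
  · simp [reluF, hc₁]
  · simp [reluF, hc₀]

lemma sum_range_single_mul {M k : ℕ} (hk : k < M) (a : ℝ) (v : ℕ → ℝ) :
    ∑ j ∈ range M, (Pi.single k a : ℕ → ℝ) j * v j = a * v k := by
  simp [Pi.single_apply, hk]

lemma sum_range_ite_mem_Icc {K N : ℕ} (hKN : K < N) (f : ℕ → ℝ) :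
    ∑ j ∈ range N, (if j ∈ Finset.Icc 1 K then f j else 0)
      = ∑ j ∈ Finset.Icc 1 K, f j := by
  rw [Finset.sum_ite_mem, Finset.inter_eq_right.2]
  intro j hj
  simp only [Finset.mem_Icc, Finset.mem_range] at hj ⊢
  omega

def selfAttn (m n hs : ℕ) (WO WV WK WQ X : ℕ → ℕ → ℝ) : ℕ → ℕ → ℝ :=
  fun i j => X i j +
    matMulN (matMulN WO hs WV) m
      (matMulN X n (fun a b =>
        Real.exp (∑ u ∈ Finset.range hs, matMulN WK m X u a * matMulN WQ m X u b) /
          ∑ t ∈ Finset.range n,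
            Real.exp (∑ u ∈ Finset.range hs, matMulN WK m X u t * matMulN WQ m X u b))) i j

lemma isSelfAttn_selfAttn (m n hs : ℕ) (WO WV WK WQ : ℕ → ℕ → ℝ) :
    IsSelfAttn m n (selfAttn m n hs WO WV WK WQ) :=
  ⟨hs, WO, WV, WK, WQ, fun _ _ _ => rfl⟩

lemma selfAttn_zero_key (m n hs : ℕ) (WO WV WQ X : ℕ → ℕ → ℝ) (i j : ℕ) :
    selfAttn m n hs WO WV 0 WQ X i j
      = X i j + (n : ℝ)⁻¹ * ∑ a ∈ range n, matMulN (matMulN WO hs WV) m X i a := by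
  simp only [selfAttn, matMulN, Pi.zero_apply, zero_mul, Finset.sum_const_zero, Real.exp_zero,
    Finset.sum_const, Finset.card_range, nsmul_eq_mul, mul_one, Finset.mul_sum]
  rw [Finset.sum_comm]
  congr 1
  refine Finset.sum_congr rfl fun a _ => Finset.sum_congr rfl fun t _ => ?_
  ring

lemma matMulN_ones_single (m k a : ℕ) (hk : k < m) (c : ℝ) (X : ℕ → ℕ → ℝ) (i : ℕ) :
    matMulN (matMulN (fun _ _ => 1) 1 (fun _ => Pi.single k c)) m X i a = c * X k a := by
  simp only [matMulN, Finset.sum_range_one, one_mul]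
  exact sum_range_single_mul hk c _

namespace InnerMatrixNet

def posWeight (n p q : ℕ) : ℝ := ((3:ℝ) ^ (p * n + q + 1))⁻¹

lemma posWeight_nonneg (n p q : ℕ) : 0 ≤ posWeight n p q := by
  unfold posWeight; positivity

lemma posWeight_le_one (n p q : ℕ) : posWeight n p q ≤ 1 :=
  inv_le_one_of_one_le₀ (one_le_pow₀ (by norm_num))

def digitWeight (D K j : ℕ) : ℝ :=
  if j ∈ Finset.Icc 1 K then 2 * ((3:ℝ) ^ (1 + D * (j - 1)))⁻¹ else 0

lemma digitWeight_nonneg (D K j : ℕ) : 0 ≤ digitWeight D K j := by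
  unfold digitWeight; split_ifs <;> positivity

lemma sum_digitWeight_mul_binDigit {D K N : ℕ} (hKN : K < N) (x : ℝ) :
    ∑ j ∈ range N, digitWeight D K j * binDigit x j = phiK D K x := by
  simp only [digitWeight, ite_mul, zero_mul]
  rw [sum_range_ite_mem_Icc hKN, phiK]
  exact Finset.sum_congr rfl fun j _ => by ring

/- For `n = 1` the positional weights do not depend on the column, so they go into the weights
of the accumulator, which then reads the digit registers directly. For `n ≥ 2` they come from
the column-dependent biases, through `d` extra registers holding `posWeight · digit` one layer
late; the width `3dn` leaves room for these only when `n ≥ 2`. -/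

def numScaled (d n : ℕ) : ℕ := if n = 1 then 0 else d

def accIdx (d n : ℕ) : ℕ := 2 * d + numScaled d n

def accSrc (d n : ℕ) : ℕ := if n = 1 then 0 else 2 * d

def accLen (n m : ℕ) : ℕ := if n = 1 then m + 1 else m

def accCoeff (d n K m p : ℕ) : ℝ :=
  if n = 1 then digitWeight (d * n) K (m + 1) * posWeight n p 0 else digitWeight (d * n) K m

def firstRow (d i : ℕ) : ℕ → ℝ := if i < 2 * d then Pi.single (i % d) 2 else 0

def hiddenRow (d n K m i : ℕ) : ℕ → ℝ :=
  if i < 2 * d then Pi.single (d + i % d) 2 - Pi.single (i % d) 2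
  else if i < accIdx d n then Pi.single (i - 2 * d) 1
  else if i = accIdx d n then
    Pi.single (accIdx d n) 1 + ∑ p ∈ range d, Pi.single (accSrc d n + p) (accCoeff d n K m p)
  else 0

def outputRow (d n i : ℕ) : ℕ → ℝ := if i = 1 then Pi.single (accIdx d n) 1 else 0

def weight (d n K : ℕ) : ℕ → ℕ → ℕ → ℝ
  | 0, _ => 0
  | 1, i => firstRow d i
  | m + 2, i => if m = K + 1 then outputRow d n i else hiddenRow d n K m i

def bias (d n : ℕ) : ℕ → ℕ → ℕ → ℝ := fun _ i s =>
  if 2 * d ≤ i ∧ i < accIdx d n then posWeight n (i - 2 * d) s - 1 else 0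

def act (d : ℕ) : ℕ → ℕ → ℝ → ℝ := fun _ i => if i < d then floorF else reluF

def dims (d n K l : ℕ) : ℕ := if l = 0 then d else if l = K + 3 then 2 * d else accIdx d n + 1

def hidden (d n K : ℕ) : ℕ → (ℕ → ℕ → ℝ) → ℕ → ℕ → ℝ :=
  ffBlockLayers (dims d n K) (weight d n K) (bias d n) (act d)

def srBlock (d n K : ℕ) (X : ℕ → ℕ → ℝ) : ℕ → ℕ → ℝ := fun i s =>
  mulVecN (weight d n K (K + 3)) (dims d n K (K + 2)) (fun t => hidden d n K (K + 2) X t s) i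

def layer (d n K l M s : ℕ) (v : ℕ → ℝ) : ℕ → ℝ :=
  fun i => act d l i (mulVecN (weight d n K l) M v i + bias d n l i s)

lemma hidden_succ {d n K : ℕ} (X : ℕ → ℕ → ℝ) (l s : ℕ) :
    (fun i => hidden d n K (l + 1) X i s)
      = layer d n K (l + 1) (dims d n K l) s (fun i => hidden d n K l X i s) :=
  rfl

section Rows

variable {d n K : ℕ} (v : ℕ → ℝ)

lemma mulVecN_first_of_lt {i : ℕ} (hi : i < 2 * d) :
    mulVecN (weight d n K 1) d v i = 2 * v (i % d) := by
  simp only [mulVecN, weight, firstRow, if_pos hi]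
  exact sum_range_single_mul (Nat.mod_lt _ (by omega)) 2 v

lemma mulVecN_first_of_le {i : ℕ} (hi : 2 * d ≤ i) : mulVecN (weight d n K 1) d v i = 0 := by
  simp [mulVecN, weight, firstRow, not_lt.2 hi]

variable {m : ℕ}

lemma weight_hidden (hm : m ≤ K) : weight d n K (m + 2) = hiddenRow d n K m :=
  funext fun _ => if_neg (by omega)

lemma mulVecN_hidden_of_lt (hm : m ≤ K) {i : ℕ} (hi : i < 2 * d) :
    mulVecN (weight d n K (m + 2)) (accIdx d n + 1) v i = 2 * v (d + i % d) - 2 * v (i % d) := by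
  have hid : i % d < d := Nat.mod_lt _ (by omega)
  simp only [mulVecN, weight_hidden hm, hiddenRow, if_pos hi, Pi.sub_apply, sub_mul,
    Finset.sum_sub_distrib]
  have hlt : ∀ k < 2 * d, k < accIdx d n + 1 := fun k hk => by unfold accIdx; omega
  rw [sum_range_single_mul (hlt _ (by omega)), sum_range_single_mul (hlt _ (by omega))]

lemma mulVecN_hidden_scaled (hm : m ≤ K) {p : ℕ} (hp : p < numScaled d n) :
    mulVecN (weight d n K (m + 2)) (accIdx d n + 1) v (2 * d + p) = v p := by
  have h₁ : ¬ 2 * d + p < 2 * d := by omega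
  have h₂ : 2 * d + p < accIdx d n := by unfold accIdx; omega
  simp only [mulVecN, weight_hidden hm, hiddenRow, if_neg h₁, if_pos h₂,
    Nat.add_sub_cancel_left]
  rw [sum_range_single_mul (by omega), one_mul]

lemma mulVecN_hidden_acc (hm : m ≤ K) :
    mulVecN (weight d n K (m + 2)) (accIdx d n + 1) v (accIdx d n)
      = v (accIdx d n) + ∑ p ∈ range d, accCoeff d n K m p * v (accSrc d n + p) := by
  have h₁ : ¬ accIdx d n < 2 * d := by unfold accIdx; omega
  have hsrc : ∀ p < d, accSrc d n + p < accIdx d n + 1 := by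
    unfold accSrc accIdx numScaled; split_ifs <;> omega
  simp only [mulVecN, weight_hidden hm, hiddenRow, if_neg h₁, lt_irrefl, if_false, if_true,
    Pi.add_apply, Finset.sum_apply, add_mul, Finset.sum_mul, Finset.sum_add_distrib]
  rw [sum_range_single_mul (Nat.lt_succ_self _), one_mul, Finset.sum_comm]
  congr 1
  exact Finset.sum_congr rfl fun p hp =>
    sum_range_single_mul (hsrc p (Finset.mem_range.1 hp)) _ v

end Rows

lemma mulVecN_output {d n K : ℕ} (v : ℕ → ℝ) (i : ℕ) :
    mulVecN (weight d n K (K + 3)) (accIdx d n + 1) v i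
      = if i = 1 then v (accIdx d n) else 0 := by
  simp only [mulVecN, weight, if_true, outputRow]
  split_ifs
  · rw [sum_range_single_mul (Nat.lt_succ_self _), one_mul]
  · simp

/-- `v` is column `s`, with entries `x`, of hidden layer `m + 1`. -/
def Registers (d n K : ℕ) (x : ℕ → ℝ) (s m : ℕ) (v : ℕ → ℝ) : Prop :=
  (∀ p < d, v p = binDigit (x p) (m + 1)) ∧
  (∀ p < d, v (d + p) = 2 * Int.fract ((2:ℝ) ^ m * x p)) ∧
  (∀ p < numScaled d n, v (2 * d + p) = posWeight n p s * binDigit (x p) m) ∧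
  v (accIdx d n) = ∑ p ∈ range d,
    posWeight n p s * ∑ j ∈ range (accLen n m), digitWeight (d * n) K j * binDigit (x p) j

section Registers

variable {d n K : ℕ} {x : ℕ → ℝ} {s m : ℕ} {v : ℕ → ℝ}

lemma registers_first (hx : ∀ p < d, x p ∈ Set.Ico 0 1) :
    Registers d n K x s 0 (layer d n K 1 d s x) := by
  have hlow : ∀ i < 2 * d, bias d n 1 i s = 0 := fun i hi => if_neg (by omega)
  refine ⟨fun p hp => ?_, fun p hp => ?_, fun p hp => ?_, ?_⟩ <;> dsimp only [layer]
  · rw [mulVecN_first_of_lt x (i := p) (by omega), hlow p (by omega), Nat.mod_eq_of_lt hp,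
      add_zero, act, if_pos hp, floorF, binDigit_succ, pow_zero, one_mul,
      Int.fract_eq_self.2 (hx p hp)]
  · have hdp : (d + p) % d = p := by rw [Nat.add_mod_left, Nat.mod_eq_of_lt hp]
    rw [mulVecN_first_of_lt x (i := d + p) (by omega), hlow (d + p) (by omega), hdp, add_zero,
      act, if_neg (by omega), reluF_of_nonneg (by linarith [(hx p hp).1]), pow_zero, one_mul,
      Int.fract_eq_self.2 (hx p hp)]
  · have hpd : p < d := by unfold numScaled at hp; split_ifs at hp <;> omega
    have hbias : bias d n 1 (2 * d + p) s = posWeight n p s - 1 := by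
      rw [bias, if_pos (by unfold accIdx; omega), Nat.add_sub_cancel_left]
    rw [mulVecN_first_of_le x (i := 2 * d + p) (by omega), hbias, act, if_neg (by omega),
      binDigit_zero_of_mem_Ico (hx p hpd), Int.cast_zero,
      ← reluF_bit_add_sub_one (Or.inl rfl) (posWeight_nonneg n p s) (posWeight_le_one n p s)]
  · have hbias : bias d n 1 (accIdx d n) s = 0 := if_neg (by omega)
    have hge : 2 * d ≤ accIdx d n := by unfold accIdx; omega
    rw [mulVecN_first_of_le x (i := accIdx d n) (by omega), hbias, act, if_neg (by omega),
      add_zero, reluF_of_nonneg le_rfl]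
    refine (Finset.sum_eq_zero fun p _ => ?_).symm
    unfold accLen
    split_ifs <;> simp [digitWeight]

lemma sum_accCoeff_mul (hs : n = 1 → s = 0) (hv : Registers d n K x s m v) :
    ∑ p ∈ range d, accCoeff d n K m p * v (accSrc d n + p)
      = ∑ p ∈ range d, posWeight n p s *
          (digitWeight (d * n) K (accLen n m) * binDigit (x p) (accLen n m)) := by
  refine Finset.sum_congr rfl fun p hp => ?_
  have hpd := Finset.mem_range.1 hp
  by_cases hn : n = 1
  · simp only [accCoeff, accSrc, accLen, if_pos hn, zero_add, hv.1 p hpd, hs hn]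
    ring
  · have hp' : p < numScaled d n := by rwa [numScaled, if_neg hn]
    simp only [accCoeff, accSrc, accLen, if_neg hn, hv.2.2.1 p hp']
    ring

lemma registers_succ (hx : ∀ p < d, x p ∈ Set.Ico 0 1) (hs : n = 1 → s = 0) (hm : m ≤ K)
    (hv : Registers d n K x s m v) :
    Registers d n K x s (m + 1) (layer d n K (m + 2) (accIdx d n + 1) s v) := by
  obtain ⟨hdigit, hfrac, hscaled, hacc⟩ := hv
  have hpre : ∀ i < 2 * d,
      mulVecN (weight d n K (m + 2)) (accIdx d n + 1) v i + bias d n (m + 2) i s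
        = 2 * Int.fract ((2:ℝ) ^ (m + 1) * x (i % d)) := by
    intro i hi
    have hid : i % d < d := Nat.mod_lt _ (by omega)
    rw [mulVecN_hidden_of_lt v hm hi, show bias d n (m + 2) i s = 0 from if_neg (by omega),
      hfrac _ hid, hdigit _ hid, fract_two_pow_succ_mul]
    ring
  refine ⟨fun p hp => ?_, fun p hp => ?_, fun p hp => ?_, ?_⟩ <;> dsimp only [layer]
  · rw [hpre p (by omega), Nat.mod_eq_of_lt hp, act, if_pos hp, floorF, binDigit_succ]
  · have hdp : (d + p) % d = p := by rw [Nat.add_mod_left, Nat.mod_eq_of_lt hp]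
    rw [hpre (d + p) (by omega), hdp, act, if_neg (by omega),
      reluF_of_nonneg (by linarith [Int.fract_nonneg ((2:ℝ) ^ (m + 1) * x p)])]
  · have hpd : p < d := by unfold numScaled at hp; split_ifs at hp <;> omega
    have hbias : bias d n (m + 2) (2 * d + p) s = posWeight n p s - 1 := by
      rw [bias, if_pos (by unfold accIdx; omega), Nat.add_sub_cancel_left]
    rw [mulVecN_hidden_scaled v hm hp, hbias, act, if_neg (by omega), hdigit p hpd,
      reluF_bit_add_sub_one (by exact_mod_cast binDigit_eq_zero_or_one (hx p hpd) (m + 1))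
        (posWeight_nonneg n p s) (posWeight_le_one n p s)]
  · have hlen : accLen n (m + 1) = accLen n m + 1 := by unfold accLen; split_ifs <;> rfl
    have hnew : v (accIdx d n) + ∑ p ∈ range d, accCoeff d n K m p * v (accSrc d n + p)
        = ∑ p ∈ range d, posWeight n p s *
            ∑ j ∈ range (accLen n (m + 1)), digitWeight (d * n) K j * binDigit (x p) j := by
      simp only [hacc, sum_accCoeff_mul hs ⟨hdigit, hfrac, hscaled, hacc⟩, hlen,
        Finset.sum_range_succ, mul_add, Finset.sum_add_distrib]
    have hbias : bias d n (m + 2) (accIdx d n) s = 0 := if_neg (by omega)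
    rw [mulVecN_hidden_acc v hm, hbias, add_zero, act, if_neg (by unfold accIdx; omega), hnew]
    refine reluF_of_nonneg (Finset.sum_nonneg fun p hp => mul_nonneg (posWeight_nonneg n p s)
      (Finset.sum_nonneg fun j _ => mul_nonneg (digitWeight_nonneg _ K j) ?_))
    exact binDigit_nonneg (hx p (Finset.mem_range.1 hp)) j

end Registers

variable {d n K : ℕ}

lemma registers_hidden {X : ℕ → ℕ → ℝ} {s : ℕ} (hx : ∀ p < d, X p s ∈ Set.Ico 0 1)
    (hs : n = 1 → s = 0) :
    ∀ m ≤ K + 1, Registers d n K (fun p => X p s) s m (fun i => hidden d n K (m + 1) X i s)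
  | 0, _ => by
    rw [hidden_succ, show dims d n K 0 = d from if_pos rfl]
    exact registers_first hx
  | m + 1, hm => by
    rw [hidden_succ, show dims d n K (m + 1) = accIdx d n + 1 by
      rw [dims, if_neg (by omega), if_neg (by omega)]]
    exact registers_succ hx hs (by omega) (registers_hidden hx hs m (by omega))

lemma srBlock_apply (X : ℕ → ℕ → ℝ) (i s : ℕ) :
    srBlock d n K X i s = if i = 1 then hidden d n K (K + 2) X (accIdx d n) s else 0 := by
  have hdims : dims d n K (K + 2) = accIdx d n + 1 := by
    rw [dims, if_neg (by omega), if_neg (by omega)]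
  rw [srBlock, hdims, mulVecN_output]

lemma srBlock_one {X : ℕ → ℕ → ℝ} {s : ℕ} (hx : ∀ p < d, X p s ∈ Set.Ico 0 1)
    (hs : n = 1 → s = 0) :
    srBlock d n K X 1 s = ∑ p ∈ range d, posWeight n p s * phiK (d * n) K (X p s) := by
  have hlen : K < accLen n (K + 1) := by unfold accLen; split_ifs <;> omega
  rw [srBlock_apply, if_pos rfl]
  simpa only [sum_digitWeight_mul_binDigit hlen] using
    (registers_hidden hx hs (K + 1) le_rfl).2.2.2

lemma accIdx_add_one_le (hd : 1 ≤ d) (hn : 1 ≤ n) : accIdx d n + 1 ≤ 3 * d * n := by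
  unfold accIdx numScaled
  split_ifs with h
  · subst h; omega
  · have : 3 * d * 2 ≤ 3 * d * n := Nat.mul_le_mul_left _ (by omega)
    omega

lemma isFFBlock_srBlock (hd : 1 ≤ d) (hn : 1 ≤ n) :
    IsFFBlock d (2 * d) (K + 3) (3 * d * n) {reluF, floorF} (srBlock d n K) := by
  refine ⟨dims d n K, weight d n K, bias d n, act d, if_pos rfl, ?_, fun l hl hlK => ?_,
    fun l i => ?_, fun _ _ _ => rfl⟩
  · rw [dims, if_neg (by omega), if_pos rfl]
  · rw [dims, if_neg (by omega), if_neg (by omega)]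
    exact accIdx_add_one_le hd hn
  · unfold act; split_ifs <;> simp

lemma sum_range_posWeight_mul_embedM (D : ℕ) (X : Fin d → Fin n → ℝ) :
    ∑ a ∈ range n, ∑ p ∈ range d, posWeight n p a * phiK D K (embedM X p a)
      = ∑ q : Fin n, ∑ p : Fin d,
          ((3:ℝ) ^ ((p : ℕ) * n + (q : ℕ) + 1))⁻¹ * phiK D K (X p q) := by
  rw [← Fin.sum_univ_eq_sum_range]
  refine Finset.sum_congr rfl fun q _ => ?_
  rw [← Fin.sum_univ_eq_sum_range]
  refine Finset.sum_congr rfl fun p _ => ?_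
  rw [embedM, dif_pos ⟨p.isLt, q.isLt⟩, posWeight]

end InnerMatrixNet

open InnerMatrixNet

theorem stmt5_general (d n K : ℕ) (hd : 1 ≤ d) (hn : 1 ≤ n) :
    ∃ Fsr FSA Aff : (ℕ → ℕ → ℝ) → ℕ → ℕ → ℝ,
      IsFFBlock d (2 * d) (K + 3) (3 * d * n) {reluF, floorF} Fsr ∧
      IsSelfAttn (2 * d) n FSA ∧
      IsAffineM (2 * d) Aff ∧
      ∀ X : Fin d → Fin n → ℝ, (∀ i j, X i j ∈ Set.Ico (0:ℝ) 1) →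
        ∀ (r : Fin d) (s : Fin n),
          Aff (FSA (Fsr (embedM X))) (r : ℕ) (s : ℕ) = innerZ d n K X s := by
  set FSA := selfAttn (2 * d) n 1 (fun _ _ => 1) (fun _ => Pi.single 1 (n : ℝ)) 0 0
  set Aff : (ℕ → ℕ → ℝ) → ℕ → ℕ → ℝ := fun Y i s =>
    mulVecN (fun _ => Pi.single 0 ((3:ℝ) ^ (K * d * n + 1))) (2 * d) (fun t => Y t s) i
      + (1 + (s : ℝ) * (3:ℝ) ^ (K * d * n))
  refine ⟨srBlock d n K, FSA, Aff, isFFBlock_srBlock hd hn, isSelfAttn_selfAttn _ _ _ _ _ _ _,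
    ⟨_, _, fun _ _ _ => rfl⟩, fun X hX r s => ?_⟩
  have hcol : ∀ a ∈ range n, ∀ p < d, embedM X p a ∈ Set.Ico 0 1 := fun a ha p hp => by
    rw [embedM, dif_pos ⟨hp, Finset.mem_range.1 ha⟩]; exact hX _ _
  have hrow : ∀ a ∈ range n, srBlock d n K (embedM X) 1 a
      = ∑ p ∈ range d, posWeight n p a * phiK (d * n) K (embedM X p a) := fun a ha =>
    srBlock_one (hcol a ha) fun h => by have := Finset.mem_range.1 ha; omega
  simp only [Aff, FSA, mulVecN]
  rw [sum_range_single_mul (by omega), selfAttn_zero_key, srBlock_apply, if_neg zero_ne_one,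
    zero_add]
  simp only [matMulN_ones_single _ _ _ (show 1 < 2 * d by omega)]
  rw [← Finset.mul_sum, inv_mul_cancel_left₀ (by positivity), Finset.sum_congr rfl hrow,
    sum_range_posWeight_mul_embedM, innerZ]
  ring

theorem stmt5 (d n K : ℕ) (hd : 1 ≤ d) (hn : 1 ≤ n) (hK : 1 ≤ K) :
    ∃ Fsr FSA Aff : (ℕ → ℕ → ℝ) → ℕ → ℕ → ℝ,
      IsFFBlock d (2 * d) (K + 3) (3 * d * n) {reluF, floorF} Fsr ∧
      IsSelfAttn (2 * d) n FSA ∧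
      IsAffineM (2 * d) Aff ∧
      ∀ X : Fin d → Fin n → ℝ, (∀ i j, X i j ∈ Set.Ico (0:ℝ) 1) →
        ∀ (r : Fin d) (s : Fin n),
          Aff (FSA (Fsr (embedM X))) (r : ℕ) (s : ℕ) = innerZ d n K X s :=
  stmt5_general d n K hd hn

end
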